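/- arXiv:1409.7228 — 5 statements merged into one kernel-verified Lean document; each statement's English description precedes it below -/
import Mathlib

section
/- For every matrix A in GL(2,p), the sum of χ(uA) over all u in GL(2,p) equals p; in particular, the sum of χ(u) over all u in GL(2,p) equals p. -/
/-!
Write `χ(M) = ψ(tr M)` with `ψ` a nontrivial additive character of `𝔽_q`. Sorting the invertible
matrices `!![a, b; c, d]` by their diagonal `(a, d)`, the number of `(b, c)` with `b * c ≠ a * d`
is `(q - 1)² + q·[a ≠ 0][d ≠ 0]`, and `ψ(a + d) = ψ a ψ d`. The first term contributes
`(q - 1)² (∑ ψ)² = 0`, the second `q (∑_{a ≠ 0} ψ a)² = q (-1)² = q`.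
Right multiplication by a unit permutes `GL(2, p)`, which gives the twisted sum.
-/

open scoped Matrix

/-- The generating character `χ(A) = exp(2πi · t(A) / p)` on `M₂(𝔽_p)`, where `t(A)` is the
integer representative of the trace of `A`. -/
noncomputable def genChar (p : ℕ) (A : Matrix (Fin 2) (Fin 2) (ZMod p)) : ℂ :=
  Complex.exp (2 * Real.pi * Complex.I * ((Matrix.trace A).val : ℂ) / p)

open Finset Matrix

lemma AddChar.sum_filter_ne_zero {G R : Type*} [AddGroup G] [Fintype G] [DecidableEq G]
    [CommRing R] [IsDomain R] {ψ : AddChar G R} (hψ : ψ ≠ 1) :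
    ∑ a with a ≠ 0, ψ a = -1 := by
  rw [filter_ne', sum_erase_eq_sub (mem_univ 0), AddChar.sum_eq_zero_of_ne_one hψ,
    AddChar.map_zero_eq_one, zero_sub]

lemma card_filter_mul_ne {K : Type*} [Field K] [Fintype K] [DecidableEq K] (t : K) :
    #{x : K × K | x.1 * x.2 ≠ t} =
      (Fintype.card K - 1) ^ 2 + if t ≠ 0 then Fintype.card K else 0 := by
  have h_ne_zero : ∀ b ∈ univ.erase (0 : K), #{c | b * c ≠ t} = Fintype.card K - 1 := by
    intro b hb
    have hb : b ≠ 0 := ne_of_mem_erase hb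
    have h_filter : ({c | b * c ≠ t} : Finset K) = univ.erase (b⁻¹ * t) := by
      ext c; simp [eq_inv_mul_iff_mul_eq₀ hb]
    rw [h_filter, card_erase_of_mem (mem_univ _), card_univ]
  rw [card_filter, Fintype.sum_prod_type, ← add_sum_erase _ _ (mem_univ 0)]
  simp_rw [← card_filter]
  rw [sum_congr rfl h_ne_zero, sum_const, card_erase_of_mem (mem_univ _), card_univ, smul_eq_mul,
    add_comm, sq]
  split_ifs with ht <;> simp [ht, eq_comm]

lemma Fintype.sum_units_eq_sum_ite_isUnit {M β : Type*} [Monoid M] [Fintype M] [Fintype Mˣ]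
    [AddCommMonoid β] [DecidablePred (IsUnit : M → Prop)] (f : M → β) :
    ∑ u : Mˣ, f u = ∑ m, if IsUnit m then f m else 0 := by
  rw [← sum_filter]
  refine (sum_map univ ⟨Units.val, Units.val_injective⟩ f).symm.trans ?_
  congr
  ext m
  simp only [mem_map, mem_filter, mem_univ, true_and]
  rfl

def Matrix.diagOffDiagEquiv (K : Type*) : (K × K) × (K × K) ≃ Matrix (Fin 2) (Fin 2) K where
  toFun x := !![x.1.1, x.2.1; x.2.2, x.1.2]
  invFun M := ((M 0 0, M 1 1), (M 0 1, M 1 0))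
  left_inv := by rintro ⟨⟨a, d⟩, ⟨b, c⟩⟩; rfl
  right_inv M := (Matrix.eta_fin_two M).symm

lemma Matrix.sum_units_fin_two_addChar_trace {K R : Type*} [Field K] [Fintype K] [DecidableEq K]
    [CommRing R] [IsDomain R] {ψ : AddChar K R} (hψ : ψ ≠ 1) :
    ∑ u : (Matrix (Fin 2) (Fin 2) K)ˣ, ψ (trace (u : Matrix (Fin 2) (Fin 2) K)) =
      Fintype.card K := by
  classical
  set q := Fintype.card K
  have h_fiber (a d : K) :
      ∑ x : K × K, (if IsUnit !![a, x.1; x.2, d] then ψ (a + d) else 0) =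
        ((q - 1) ^ 2 : ℕ) * (ψ a * ψ d) +
          q * ((if a ≠ 0 then ψ a else 0) * (if d ≠ 0 then ψ d else 0)) := by
    simp_rw [isUnit_iff_isUnit_det, det_fin_two_of, isUnit_iff_ne_zero, sub_ne_zero,
      @ne_comm _ (a * d)]
    rw [← sum_filter, sum_const, card_filter_mul_ne, ite_zero_mul_ite_zero, AddChar.map_add_eq_mul,
      nsmul_eq_mul]
    simp only [mul_ne_zero_iff]
    split_ifs <;> push_cast <;> ring
  calc ∑ u : (Matrix (Fin 2) (Fin 2) K)ˣ, ψ (trace (u : Matrix (Fin 2) (Fin 2) K))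
      = ∑ M : Matrix (Fin 2) (Fin 2) K, if IsUnit M then ψ (trace M) else 0 :=
        Fintype.sum_units_eq_sum_ite_isUnit (fun M => ψ (trace M))
    _ = ∑ ad : K × K, ∑ x : K × K,
          if IsUnit !![ad.1, x.1; x.2, ad.2] then ψ (ad.1 + ad.2) else 0 := by
        rw [← (diagOffDiagEquiv K).sum_comp, Fintype.sum_prod_type]
        simp only [diagOffDiagEquiv, Equiv.coe_fn_mk, trace_fin_two_of]
    _ = ((q - 1) ^ 2 : ℕ) * ((∑ a, ψ a) * ∑ d, ψ d) +
          q * ((∑ a with a ≠ 0, ψ a) * ∑ d with d ≠ 0, ψ d) := by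
        simp_rw [h_fiber, sum_add_distrib, ← mul_sum, sum_filter, sum_mul_sum, Fintype.sum_prod_type]
    _ = q := by
        rw [AddChar.sum_eq_zero_of_ne_one hψ, AddChar.sum_filter_ne_zero hψ]
        ring

lemma genChar_eq_stdAddChar_trace (p : ℕ) [NeZero p] (A : Matrix (Fin 2) (Fin 2) (ZMod p)) :
    genChar p A = ZMod.stdAddChar (Matrix.trace A) := by
  rw [ZMod.stdAddChar_apply, ZMod.toCircle_apply]
  rfl

/-- For every `A ∈ GL(2,p)`, `∑_{u ∈ GL(2,p)} χ(uA) = p`; in particular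
`∑_{u ∈ GL(2,p)} χ(u) = p`. -/
theorem sum_genChar_mul_unit (p : ℕ) [Fact p.Prime]
    (A : Matrix (Fin 2) (Fin 2) (ZMod p)) (hA : IsUnit A) :
    (∑ u : (Matrix (Fin 2) (Fin 2) (ZMod p))ˣ,
        genChar p ((u : Matrix (Fin 2) (Fin 2) (ZMod p)) * A)) = (p : ℂ) ∧
    (∑ u : (Matrix (Fin 2) (Fin 2) (ZMod p))ˣ,
        genChar p (u : Matrix (Fin 2) (Fin 2) (ZMod p))) = (p : ℂ) := by
  have hψ : (ZMod.stdAddChar : AddChar (ZMod p) ℂ) ≠ 1 := by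
    refine AddChar.ne_one_iff.2 ⟨1, fun h => one_ne_zero (ZMod.injective_stdAddChar (N := p) ?_)⟩
    rw [h, AddChar.map_zero_eq_one]
  have h_units : ∑ u : (Matrix (Fin 2) (Fin 2) (ZMod p))ˣ,
      genChar p (u : Matrix (Fin 2) (Fin 2) (ZMod p)) = p := by
    simp_rw [genChar_eq_stdAddChar_trace]
    rw [Matrix.sum_units_fin_two_addChar_trace hψ, ZMod.card]
  refine ⟨?_, h_units⟩
  rw [← h_units]
  exact Fintype.sum_equiv (Equiv.mulRight hA.unit) _ _ fun u => by simp
end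

section
/- Let Γ > 0 be a real number and define w(A) = Γ·(1 − (1/|GL(2,p)|)·Σ_{u ∈ GL(2,p)} χ(uA)) for A ∈ M_2(F_p). Then w(A) = 0 if A = 0; w(A) = Γ·(1 − 1/((p^2−1)(p−1))) if A ∈ GL(2,p); and w(A) = Γ·p^2/(p^2−1) if A is nonzero and not invertible. -/
/-!
Write `q = |F|`, let `a, b` be the columns of `A ≠ 0`, and describe a matrix by its rows `x, y`,
so that `tr (M A) = x ⬝ a + y ⬝ b`. The matrix is singular exactly when `x = 0` or `y` lies on
the line `F x`, so for `x ≠ 0` orthogonality of a primitive character `ψ` gives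
`∑_{y ∉ F x} ψ (y ⬝ b) = q² [b = 0] - q [x ⬝ b = 0]`. Summing this against `ψ (x ⬝ a)` leaves,
when `b ≠ 0`, a character sum over the line `b^⊥`, which is `q` or `0` according as `a ∈ F b`
or not, i.e. as `det A` vanishes or not. Hence `∑_{u ∈ GL₂(F)} ψ (tr (u A))` is `q` for
invertible `A` and `q - q²` for singular `A ≠ 0`; dividing by `|GL₂(F)| = (q² - 1)(q² - q)`
gives the three values of the weight.
-/

open Finset Matrix

namespace AddChar

theorem map_sum_eq_prod {A M ι : Type*} [AddCommMonoid A] [CommMonoid M] (ψ : AddChar A M)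
    (s : Finset ι) (f : ι → A) : ψ (∑ i ∈ s, f i) = ∏ i ∈ s, ψ (f i) := by
  induction s using Finset.cons_induction with
  | empty => simp
  | cons i s hi ih => rw [sum_cons, prod_cons, map_add_eq_mul, ih]

variable {F R ι : Type*} [Field F] [Fintype F] [DecidableEq F] [CommRing R] [IsDomain R]
  [Fintype ι] {ψ : AddChar F R}

theorem sum_apply_dotProduct [DecidableEq ι] (hψ : ψ.IsPrimitive) (b : ι → F) :
    ∑ x : ι → F, ψ (x ⬝ᵥ b) = if b = 0 then (Fintype.card F : R) ^ Fintype.card ι else 0 := by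
  simp_rw [dotProduct, map_sum_eq_prod]
  rw [← Fintype.prod_sum fun i t ↦ ψ (t * b i)]
  simp_rw [sum_mulShift _ hψ, Nat.cast_ite, Nat.cast_zero, Fintype.prod_ite_zero, prod_const,
    card_univ, ← funext_iff]
  rfl

theorem sum_apply_smul_dotProduct (hψ : ψ.IsPrimitive) (x b : ι → F) :
    ∑ t : F, ψ ((t • x) ⬝ᵥ b) = if x ⬝ᵥ b = 0 then (Fintype.card F : R) else 0 := by
  simp_rw [smul_dotProduct, smul_eq_mul, sum_mulShift _ hψ]
  push_cast
  rfl

end AddChar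

namespace Matrix

theorem sum_units_eq_sum_filter_det_ne_zero {n K M : Type*} [Fintype n] [DecidableEq n]
    [Field K] [Fintype K] [DecidableEq K] [AddCommMonoid M] (f : Matrix n n K → M) :
    ∑ u : (Matrix n n K)ˣ, f u = ∑ A with A.det ≠ 0, f A := by
  rw [sum_filter]
  refine Fintype.sum_of_injective _ Units.val_injective _ _ (fun A hA ↦ ?_) fun u ↦ ?_
  · have hA' : ¬IsUnit A := fun h ↦ hA ⟨h.unit, rfl⟩
    rw [isUnit_iff_isUnit_det, isUnit_iff_ne_zero] at hA'
    exact if_neg hA'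
  · exact (if_pos (isUnit_iff_ne_zero.mp ((isUnit_iff_isUnit_det _).mp u.isUnit))).symm

theorem card_units_fin_two {K R : Type*} [Field K] [Fintype K] [DecidableEq K] [CommRing R] :
    (Fintype.card (Matrix (Fin 2) (Fin 2) K)ˣ : R) =
      ((Fintype.card K : R) ^ 2 - 1) * ((Fintype.card K : R) ^ 2 - Fintype.card K) := by
  have hq : 0 < Fintype.card K := Fintype.card_pos
  rw [← Nat.card_eq_fintype_card, card_GL_field, Fin.prod_univ_two, Fin.val_zero, Fin.val_one,
    pow_zero, pow_one, Nat.cast_mul, Nat.cast_sub (Nat.one_le_pow _ _ hq),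
    Nat.cast_sub (Nat.le_self_pow two_ne_zero _)]
  simp

theorem sum_fin_two_rows {α M : Type*} [Fintype α] [AddCommMonoid M]
    (g : Matrix (Fin 2) (Fin 2) α → M) : ∑ A, g A = ∑ x, ∑ y, g (of ![x, y]) := by
  rw [← Fintype.sum_prod_type']
  exact Fintype.sum_equiv (of.symm.trans (piFinTwoEquiv fun _ ↦ Fin 2 → α)) _ _ fun A ↦ by
    congr 1; ext i : 1; fin_cases i <;> rfl

section Field

variable {F : Type*} [Field F]

theorem trace_of_rows_mul (x y : Fin 2 → F) (A : Matrix (Fin 2) (Fin 2) F) :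
    trace (of ![x, y] * A) = x ⬝ᵥ Aᵀ 0 + y ⬝ᵥ Aᵀ 1 := by
  simp only [trace, diag, mul_apply', Fin.sum_univ_two]
  rfl

theorem det_of_rows_eq_zero_iff {x : Fin 2 → F} (hx : x ≠ 0) (y : Fin 2 → F) :
    (of ![x, y]).det = 0 ↔ ∃ t : F, t • x = y := by
  rw [← not_iff_not, ← ne_eq, ← isUnit_iff_ne_zero, ← isUnit_iff_isUnit_det,
    ← linearIndependent_rows_iff_isUnit, not_exists]
  exact LinearIndependent.pair_iff' hx

variable [Fintype F] [DecidableEq F]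

theorem sum_filter_det_of_rows_eq_zero {M : Type*} [AddCommMonoid M] {x : Fin 2 → F}
    (hx : x ≠ 0) (g : (Fin 2 → F) → M) :
    ∑ y with (of ![x, y]).det = 0, g y = ∑ t : F, g (t • x) := by
  have hline : ({y | (of ![x, y]).det = 0} : Finset _) = univ.image fun t : F ↦ t • x := by
    ext y
    simp [det_of_rows_eq_zero_iff hx]
  rw [hline, sum_image fun s _ t _ h ↦ smul_left_injective F hx h]

variable {R : Type*} [CommRing R] [IsDomain R] {ψ : AddChar F R}

theorem sum_filter_det_of_rows_ne_zero (hψ : ψ.IsPrimitive) {x : Fin 2 → F} (hx : x ≠ 0)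
    (b : Fin 2 → F) :
    ∑ y with (of ![x, y]).det ≠ 0, ψ (y ⬝ᵥ b) =
      (if b = 0 then (Fintype.card F : R) ^ 2 else 0) -
        if x ⬝ᵥ b = 0 then (Fintype.card F : R) else 0 := by
  rw [← AddChar.sum_apply_smul_dotProduct hψ,
    ← sum_filter_det_of_rows_eq_zero hx fun y ↦ ψ (y ⬝ᵥ b), eq_sub_iff_add_eq,
    sum_filter_not_add_sum_filter, AddChar.sum_apply_dotProduct hψ, Fintype.card_fin]

theorem sum_filter_dotProduct_eq_zero (hψ : ψ.IsPrimitive) {b : Fin 2 → F} (hb : b ≠ 0)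
    (a : Fin 2 → F) :
    ∑ x with x ⬝ᵥ b = 0, ψ (x ⬝ᵥ a) =
      if (of ![a, b]).det = 0 then (Fintype.card F : R) else 0 := by
  have hb' : ![b 1, -b 0] ≠ 0 := by
    contrapose! hb
    have h0 := congrFun hb 0
    have h1 := congrFun hb 1
    ext i; fin_cases i <;> simp_all
  -- `b^⊥` is the line spanned by `(b 1, -b 0)`.
  have hperp : ∀ x : Fin 2 → F, (of ![![b 1, -b 0], x]).det = x ⬝ᵥ b := fun x ↦ by
    simp [det_fin_two, dotProduct, Fin.sum_univ_two]; ring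
  have hdet : ![b 1, -b 0] ⬝ᵥ a = (of ![a, b]).det := by
    simp [det_fin_two, dotProduct, Fin.sum_univ_two]; ring
  simp_rw [← hperp, sum_filter_det_of_rows_eq_zero hb', AddChar.sum_apply_smul_dotProduct hψ,
    hdet]

theorem sum_det_of_rows_ne_zero_addChar (hψ : ψ.IsPrimitive) {a b : Fin 2 → F}
    (hab : ¬(a = 0 ∧ b = 0)) :
    ∑ x, ∑ y with (of ![x, y]).det ≠ 0, ψ (x ⬝ᵥ a + y ⬝ᵥ b) =
      if (of ![a, b]).det ≠ 0 then (Fintype.card F : R)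
      else Fintype.card F - (Fintype.card F : R) ^ 2 := by
  simp_rw [AddChar.map_add_eq_mul, ← mul_sum]
  rw [← sum_erase univ (a := 0) (by simp [det_fin_two]), sum_congr rfl fun x hx ↦ by
    rw [sum_filter_det_of_rows_ne_zero hψ (ne_of_mem_erase hx)], sum_erase_eq_sub (mem_univ 0),
    zero_dotProduct, zero_dotProduct, AddChar.map_zero_eq_one, one_mul, if_pos rfl]
  by_cases hb : b = 0
  · have ha : a ≠ 0 := fun ha ↦ hab ⟨ha, hb⟩
    subst hb
    simp only [if_true, dotProduct_zero, ← sum_mul, AddChar.sum_apply_dotProduct hψ, if_neg ha,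
      zero_mul]
    simp [det_fin_two]
  · simp only [if_neg hb, zero_sub, mul_neg, sum_neg_distrib, mul_ite, mul_zero, ← sum_filter,
      ← sum_mul, sum_filter_dotProduct_eq_zero hψ hb, ite_not]
    split_ifs <;> ring

theorem sum_units_addChar_trace_mul (hψ : ψ.IsPrimitive) {A : Matrix (Fin 2) (Fin 2) F}
    (hA : A ≠ 0) :
    ∑ u : (Matrix (Fin 2) (Fin 2) F)ˣ, ψ (trace ((u : Matrix (Fin 2) (Fin 2) F) * A)) =
      if IsUnit A then (Fintype.card F : R) else Fintype.card F - (Fintype.card F : R) ^ 2 := by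
  have hcols : of ![Aᵀ 0, Aᵀ 1] = Aᵀ := by
    ext i : 1; fin_cases i <;> rfl
  have hcols_ne : ¬(Aᵀ 0 = 0 ∧ Aᵀ 1 = 0) := fun h ↦ hA <| by
    rw [← transpose_eq_zero, ← hcols, h.1, h.2]; ext i : 1; fin_cases i <;> rfl
  rw [sum_units_eq_sum_filter_det_ne_zero fun M ↦ ψ (trace (M * A)), sum_filter, sum_fin_two_rows]
  simp_rw [← sum_filter, trace_of_rows_mul]
  rw [sum_det_of_rows_ne_zero_addChar hψ hcols_ne]
  simp only [hcols, det_transpose, isUnit_iff_isUnit_det, isUnit_iff_ne_zero]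

end Field

end Matrix

theorem homogeneous_weight_on_M2_general (p : ℕ) [Fact p.Prime] (Γ : ℝ)
    (w : Matrix (Fin 2) (Fin 2) (ZMod p) → ℂ)
    (hw : ∀ A, w A = (Γ : ℂ) *
      (1 - (1 / (Fintype.card (Matrix (Fin 2) (Fin 2) (ZMod p))ˣ : ℂ)) *
        ∑ u : (Matrix (Fin 2) (Fin 2) (ZMod p))ˣ,
          genChar p ((u : Matrix (Fin 2) (Fin 2) (ZMod p)) * A))) :
    w 0 = 0 ∧
    (∀ A : Matrix (Fin 2) (Fin 2) (ZMod p), IsUnit A →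
      w A = (Γ : ℂ) * (1 - 1 / (((p : ℂ) ^ 2 - 1) * ((p : ℂ) - 1)))) ∧
    (∀ A : Matrix (Fin 2) (Fin 2) (ZMod p), A ≠ 0 → ¬ IsUnit A →
      w A = (Γ : ℂ) * ((p : ℂ) ^ 2 / ((p : ℂ) ^ 2 - 1))) := by
  have hχ : ∀ A, genChar p A = ZMod.stdAddChar (trace A) := fun A ↦ by
    rw [genChar, ZMod.stdAddChar_apply, ZMod.toCircle_apply]
  have hψ := ZMod.isPrimitive_stdAddChar p
  have hprime : p.Prime := Fact.out
  have hp0 : (p : ℂ) ≠ 0 := by exact_mod_cast hprime.ne_zero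
  have hp : (p : ℂ) - 1 ≠ 0 := sub_ne_zero.mpr (by exact_mod_cast hprime.ne_one)
  have hp' : (p : ℂ) + 1 ≠ 0 := by exact_mod_cast p.succ_ne_zero
  have hp2 : (p : ℂ) ^ 2 - 1 ≠ 0 := by
    rw [sq, mul_self_sub_one]
    exact mul_ne_zero hp' hp
  refine ⟨?_, fun A hA ↦ ?_, fun A hA0 hA ↦ ?_⟩
  · simp [hw, hχ, Fintype.card_ne_zero]
  all_goals simp only [hw, hχ, card_units_fin_two, ZMod.card]
  · rw [sum_units_addChar_trace_mul hψ hA.ne_zero, if_pos hA, ZMod.card]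
    field_simp
  · rw [sum_units_addChar_trace_mul hψ hA0, if_neg hA, ZMod.card]
    field_simp
    ring

/-- The homogeneous weight `w(A) = Γ(1 − |GL(2,p)|⁻¹ ∑_{u ∈ GL(2,p)} χ(uA))` on `M₂(𝔽_p)`
takes the value `0` at `A = 0`, the value `Γ(1 − 1/((p²−1)(p−1)))` on `GL(2,p)`, and the
value `Γ p²/(p²−1)` on the nonzero non-invertible matrices. -/
theorem homogeneous_weight_on_M2 (p : ℕ) [Fact p.Prime] (Γ : ℝ) (hΓ : 0 < Γ)
    (w : Matrix (Fin 2) (Fin 2) (ZMod p) → ℂ)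
    (hw : ∀ A, w A = (Γ : ℂ) *
      (1 - (1 / (Fintype.card (Matrix (Fin 2) (Fin 2) (ZMod p))ˣ : ℂ)) *
        ∑ u : (Matrix (Fin 2) (Fin 2) (ZMod p))ˣ,
          genChar p ((u : Matrix (Fin 2) (Fin 2) (ZMod p)) * A))) :
    w 0 = 0 ∧
    (∀ A : Matrix (Fin 2) (Fin 2) (ZMod p), IsUnit A →
      w A = (Γ : ℂ) * (1 - 1 / (((p : ℂ) ^ 2 - 1) * ((p : ℂ) - 1)))) ∧
    (∀ A : Matrix (Fin 2) (Fin 2) (ZMod p), A ≠ 0 → ¬ IsUnit A →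
      w A = (Γ : ℂ) * ((p : ℂ) ^ 2 / ((p : ℂ) ^ 2 - 1))) :=
  homogeneous_weight_on_M2_general p Γ w hw
end

section
/- Let Γ > 0 be a real number and define w: M_2(F_p) → ℝ by w(0) = 0, w(A) = Γ·(1 − 1/((p^2−1)(p−1))) if A is invertible, and w(A) = Γ·p^2/(p^2−1) otherwise. Then w is a homogeneous weight with average value Γ: (H1) whenever two matrices x, y generate the same principal left ideal (i.e., {rx : r ∈ M_2(F_p)} = {ry : r ∈ M_2(F_p)}), then w(x) = w(y), and symmetrically for principal right ideals; and (H2) for every nonzero x ∈ M_2(F_p), the sum of w(y) over all y in the left ideal Rx = {rx : r ∈ M_2(F_p)} equals Γ·|Rx|, and symmetrically for the right ideal xR. -/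
/-!
The weight only distinguishes `0`, units and nonzero singular matrices, and two generators of the
same one-sided ideal divide each other, so (in the Dedekind-finite ring `M₂(F_q)`) they are zero,
resp. units, simultaneously. A unit generates the whole ring, and the sum over `M₂(F_q)` follows
from `|GL₂(F_q)| = (q² - 1)(q² - q)`. A nonzero singular `x` has a one-dimensional row space, so
`Rx`, the matrices whose rows lie in it, has `q²` elements, all singular; `xR` is `(Rxᵀ)ᵀ`.
-/

open Finset Matrix

section MatrixCounting

variable {l m n α : Type*} [Fintype l] [Fintype m] [Fintype n] [Fintype α]

theorem card_matrix [DecidableEq m] [DecidableEq n] :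
    Fintype.card (Matrix m n α) = Fintype.card α ^ (Fintype.card m * Fintype.card n) := by
  rw [Fintype.card_congr of.symm, Fintype.card_fun, Fintype.card_fun, ← pow_mul, mul_comm]

theorem card_image_mul_right_univ [DecidableEq l] [DecidableEq m] [DecidableEq α] [Semiring α]
    (x : Matrix m n α) :
    #(univ.image fun r : Matrix l m α => r * x) =
      #(univ.image fun v : m → α => v ᵥ* x) ^ Fintype.card l := by
  have hrows : (univ.image fun r : Matrix l m α => r * x).map of.symm.toEmbedding =
      Fintype.piFinset fun _ => univ.image fun v : m → α => v ᵥ* x := by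
    ext z
    simp only [mem_map_equiv, Equiv.symm_symm, Fintype.mem_piFinset, mem_image, mem_univ,
      true_and]
    constructor
    · rintro ⟨r, hr⟩ i
      exact ⟨r i, congrFun hr i⟩
    · intro h
      choose r hr using h
      exact ⟨r, funext hr⟩
  rw [← card_map, hrows, Fintype.card_piFinset, prod_const, card_univ]

theorem card_image_mul_left_univ [DecidableEq l] [DecidableEq n] [DecidableEq α] [CommSemiring α]
    (x : Matrix m n α) :
    #(univ.image fun r : Matrix n l α => x * r) =
      #(univ.image fun r : Matrix l n α => r * xᵀ) := by
  have hcols : (univ.image fun r : Matrix l n α => r * xᵀ).image transpose =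
      univ.image fun r : Matrix n l α => x * r := by
    ext z
    simp only [image_image, Function.comp_def, transpose_mul, transpose_transpose, mem_image,
      mem_univ, true_and]
    exact ⟨fun ⟨r, hr⟩ => ⟨rᵀ, hr⟩, fun ⟨r, hr⟩ => ⟨rᵀ, by rwa [transpose_transpose]⟩⟩
  rw [← hcols, card_image_of_injective _ transpose_injective]

end MatrixCounting

section FiniteField

variable {K : Type*} [Field K] [Fintype K]

theorem sq_card_sub_one_pos : (0 : ℝ) < (Fintype.card K : ℝ) ^ 2 - 1 := by
  have : (1 : ℝ) < Fintype.card K := by exact_mod_cast Fintype.one_lt_card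
  nlinarith

variable [DecidableEq K]

theorem card_image_vecMul_univ_of_ne_zero_of_not_isUnit {x : Matrix (Fin 2) (Fin 2) K}
    (hx : x ≠ 0) (hu : ¬IsUnit x) :
    #(univ.image fun v : Fin 2 → K => v ᵥ* x) = Fintype.card K := by
  set V := LinearMap.range x.vecMulLinear
  have hV : #(univ.image fun v : Fin 2 → K => v ᵥ* x) = Nat.card V := by
    rw [← Set.toFinset_range, ← Nat.card_eq_card_toFinset]
    rfl
  have hV_ne_bot : V ≠ ⊥ := by
    intro h
    apply hx
    ext i j
    have : Pi.single i 1 ᵥ* x ∈ V := ⟨Pi.single i 1, rfl⟩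
    rw [h, Submodule.mem_bot, single_one_vecMul] at this
    exact congrFun this j
  have hV_ne_top : V ≠ ⊤ := by
    intro h
    apply hu
    rw [← vecMul_surjective_iff_isUnit]
    intro w
    obtain ⟨v, hv⟩ : w ∈ V := h ▸ Submodule.mem_top
    exact ⟨v, hv⟩
  have hrank : Module.finrank K V = 1 := by
    have h1 := Submodule.finrank_le V
    have h2 : Module.finrank K V ≠ 0 := fun h => hV_ne_bot (Submodule.finrank_eq_zero.1 h)
    have h3 : Module.finrank K V ≠ 2 := fun h =>
      hV_ne_top (Submodule.eq_top_of_finrank_eq (by simpa using h))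
    simp only [Module.finrank_fin_fun] at h1
    omega
  rw [hV, Module.natCard_eq_pow_finrank (K := K), hrank, pow_one, Nat.card_eq_fintype_card]

theorem card_image_mul_right_univ_of_ne_zero_of_not_isUnit {x : Matrix (Fin 2) (Fin 2) K}
    (hx : x ≠ 0) (hu : ¬IsUnit x) :
    #(univ.image fun r : Matrix (Fin 2) (Fin 2) K => r * x) = Fintype.card K ^ 2 := by
  rw [card_image_mul_right_univ, card_image_vecMul_univ_of_ne_zero_of_not_isUnit hx hu,
    Fintype.card_fin]

theorem card_image_mul_left_univ_of_ne_zero_of_not_isUnit {x : Matrix (Fin 2) (Fin 2) K}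
    (hx : x ≠ 0) (hu : ¬IsUnit x) :
    #(univ.image fun r : Matrix (Fin 2) (Fin 2) K => x * r) = Fintype.card K ^ 2 := by
  rw [card_image_mul_left_univ, card_image_mul_right_univ_of_ne_zero_of_not_isUnit
    (by rwa [Ne, transpose_eq_zero]) (by rwa [isUnit_transpose])]

theorem card_filter_isUnit_matrix_fin_two :
    (#(univ.filter fun A : Matrix (Fin 2) (Fin 2) K => IsUnit A) : ℝ) =
      ((Fintype.card K : ℝ) ^ 2 - 1) * ((Fintype.card K : ℝ) ^ 2 - Fintype.card K) := by
  have hunits : univ.filter (fun A : Matrix (Fin 2) (Fin 2) K => IsUnit A) =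
      univ.image Units.val := by
    ext A
    simp [IsUnit, eq_comm]
  have hq : 1 ≤ Fintype.card K := Fintype.card_pos
  rw [hunits, card_image_of_injective _ Units.val_injective, card_univ,
    ← Nat.card_eq_fintype_card]
  change (Nat.card (GL (Fin 2) K) : ℝ) = _
  rw [card_GL_field, Fin.prod_univ_two, Fin.val_zero, Fin.val_one, pow_zero, pow_one,
    Nat.cast_mul, Nat.cast_sub (Nat.one_le_pow _ _ hq),
    Nat.cast_sub (Nat.le_self_pow two_ne_zero _)]
  push_cast
  ring

variable (K) in
noncomputable def homogeneousWeight (Γ : ℝ) (A : Matrix (Fin 2) (Fin 2) K) : ℝ :=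
  if A = 0 then 0
  else if IsUnit A then
    Γ * (1 - 1 / (((Fintype.card K : ℝ) ^ 2 - 1) * ((Fintype.card K : ℝ) - 1)))
  else Γ * ((Fintype.card K : ℝ) ^ 2 / ((Fintype.card K : ℝ) ^ 2 - 1))

variable {Γ : ℝ}

theorem homogeneousWeight_zero : homogeneousWeight K Γ 0 = 0 :=
  if_pos rfl

theorem homogeneousWeight_of_isUnit {A : Matrix (Fin 2) (Fin 2) K} (hu : IsUnit A) :
    homogeneousWeight K Γ A =
      Γ * (1 - 1 / (((Fintype.card K : ℝ) ^ 2 - 1) * ((Fintype.card K : ℝ) - 1))) := by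
  rw [homogeneousWeight, if_neg hu.ne_zero, if_pos hu]

theorem homogeneousWeight_of_not_isUnit {A : Matrix (Fin 2) (Fin 2) K} (h0 : A ≠ 0)
    (hu : ¬IsUnit A) :
    homogeneousWeight K Γ A =
      Γ * ((Fintype.card K : ℝ) ^ 2 / ((Fintype.card K : ℝ) ^ 2 - 1)) := by
  rw [homogeneousWeight, if_neg h0, if_neg hu]

theorem homogeneousWeight_eq_of_range_mul_right_eq {x y : Matrix (Fin 2) (Fin 2) K}
    (h : Set.range (· * x) = Set.range (· * y)) :
    homogeneousWeight K Γ x = homogeneousWeight K Γ y := by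
  obtain ⟨r, rfl⟩ : x ∈ Set.range (· * y) := h ▸ ⟨1, one_mul x⟩
  obtain ⟨s, hs : s * (r * y) = y⟩ : y ∈ Set.range (· * (r * y)) := h.symm ▸ ⟨1, one_mul y⟩
  have h0 : r * y = 0 ↔ y = 0 :=
    ⟨fun h => by rw [← hs, h, mul_zero], fun h => by rw [h, mul_zero]⟩
  have hu : IsUnit (r * y) ↔ IsUnit y :=
    ⟨isUnit_of_mul_isUnit_right, fun h => isUnit_of_mul_isUnit_right (hs ▸ h)⟩
  simp only [homogeneousWeight, h0, hu]

theorem homogeneousWeight_eq_of_range_mul_left_eq {x y : Matrix (Fin 2) (Fin 2) K}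
    (h : Set.range (x * ·) = Set.range (y * ·)) :
    homogeneousWeight K Γ x = homogeneousWeight K Γ y := by
  obtain ⟨r, rfl⟩ : x ∈ Set.range (y * ·) := h ▸ ⟨1, mul_one x⟩
  obtain ⟨s, hs : y * r * s = y⟩ : y ∈ Set.range (y * r * ·) := h.symm ▸ ⟨1, mul_one y⟩
  have h0 : y * r = 0 ↔ y = 0 :=
    ⟨fun h => by rw [← hs, h, zero_mul], fun h => by rw [h, zero_mul]⟩
  have hu : IsUnit (y * r) ↔ IsUnit y :=
    ⟨isUnit_of_mul_isUnit_left, fun h => isUnit_of_mul_isUnit_left (hs ▸ h)⟩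
  simp only [homogeneousWeight, h0, hu]

theorem sum_homogeneousWeight_of_forall_not_isUnit {S : Finset (Matrix (Fin 2) (Fin 2) K)}
    (h0 : 0 ∈ S) (hS : ∀ A ∈ S, ¬IsUnit A) :
    ∑ A ∈ S, homogeneousWeight K Γ A =
      (#S - 1 : ℝ) * (Γ * ((Fintype.card K : ℝ) ^ 2 / ((Fintype.card K : ℝ) ^ 2 - 1))) := by
  rw [← sum_erase_add S _ h0, homogeneousWeight_zero, add_zero,
    sum_congr rfl fun A hA => homogeneousWeight_of_not_isUnit (ne_of_mem_erase hA)
      (hS A (mem_of_mem_erase hA)),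
    sum_const, card_erase_of_mem h0, nsmul_eq_mul, Nat.cast_pred (card_pos.2 ⟨0, h0⟩)]

theorem sum_homogeneousWeight_of_card_eq {S : Finset (Matrix (Fin 2) (Fin 2) K)}
    (h0 : 0 ∈ S) (hS : ∀ A ∈ S, ¬IsUnit A) (hcard : #S = Fintype.card K ^ 2) :
    ∑ A ∈ S, homogeneousWeight K Γ A = Γ * #S := by
  have hq : (Fintype.card K : ℝ) ^ 2 - 1 ≠ 0 := sq_card_sub_one_pos.ne'
  rw [sum_homogeneousWeight_of_forall_not_isUnit h0 hS, hcard]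
  push_cast
  field_simp

theorem sum_homogeneousWeight_univ :
    ∑ A, homogeneousWeight K Γ A = Γ * Fintype.card (Matrix (Fin 2) (Fin 2) K) := by
  have hq1 : (Fintype.card K : ℝ) - 1 ≠ 0 := by
    have : (1 : ℝ) < Fintype.card K := by exact_mod_cast Fintype.one_lt_card
    linarith
  have hq2 : (Fintype.card K : ℝ) ^ 2 - 1 ≠ 0 := sq_card_sub_one_pos.ne'
  have hcard : (Fintype.card (Matrix (Fin 2) (Fin 2) K) : ℝ) = (Fintype.card K : ℝ) ^ 4 := by
    rw [card_matrix]
    simp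
  have hunits := card_filter_isUnit_matrix_fin_two (K := K)
  have hnonunits : (#(univ.filter fun A : Matrix (Fin 2) (Fin 2) K => ¬IsUnit A) : ℝ) =
      (Fintype.card K : ℝ) ^ 4 -
        #(univ.filter fun A : Matrix (Fin 2) (Fin 2) K => IsUnit A) := by
    rw [← hcard, ← card_univ, ← card_filter_add_card_filter_not (s := univ) IsUnit]
    push_cast
    ring
  rw [← sum_filter_add_sum_filter_not univ IsUnit,
    sum_congr rfl fun A hA => homogeneousWeight_of_isUnit (mem_filter.1 hA).2,
    sum_homogeneousWeight_of_forall_not_isUnit (mem_filter.2 ⟨mem_univ _, not_isUnit_zero⟩)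
      fun A hA => (mem_filter.1 hA).2,
    sum_const, nsmul_eq_mul, hnonunits, hunits, hcard]
  field_simp
  ring

theorem sum_homogeneousWeight_image_mul_right {x : Matrix (Fin 2) (Fin 2) K} (hx : x ≠ 0) :
    ∑ y ∈ univ.image (· * x), homogeneousWeight K Γ y = Γ * #(univ.image (· * x)) := by
  by_cases hu : IsUnit x
  · rw [image_univ_of_surjective (IsUnit.isUnit_iff_mulRight_bijective.1 hu).2,
      sum_homogeneousWeight_univ, card_univ]
  · refine sum_homogeneousWeight_of_card_eq (mem_image.2 ⟨0, mem_univ _, zero_mul x⟩) ?_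
      (card_image_mul_right_univ_of_ne_zero_of_not_isUnit hx hu)
    rintro _ hA
    obtain ⟨r, -, rfl⟩ := mem_image.1 hA
    exact fun hr => hu (isUnit_of_mul_isUnit_right hr)

theorem sum_homogeneousWeight_image_mul_left {x : Matrix (Fin 2) (Fin 2) K} (hx : x ≠ 0) :
    ∑ y ∈ univ.image (x * ·), homogeneousWeight K Γ y = Γ * #(univ.image (x * ·)) := by
  by_cases hu : IsUnit x
  · rw [image_univ_of_surjective (IsUnit.isUnit_iff_mulLeft_bijective.1 hu).2,
      sum_homogeneousWeight_univ, card_univ]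
  · refine sum_homogeneousWeight_of_card_eq (mem_image.2 ⟨0, mem_univ _, mul_zero x⟩) ?_
      (card_image_mul_left_univ_of_ne_zero_of_not_isUnit hx hu)
    rintro _ hA
    obtain ⟨r, -, rfl⟩ := mem_image.1 hA
    exact fun hr => hu (isUnit_of_mul_isUnit_left hr)

end FiniteField

theorem homogeneous_weight_is_homogeneous_general (p : ℕ) [Fact p.Prime] (Γ : ℝ)
    (w : Matrix (Fin 2) (Fin 2) (ZMod p) → ℝ)
    (hw : ∀ A, w A =
      if A = 0 then 0
      else if IsUnit A then Γ * (1 - 1 / (((p : ℝ) ^ 2 - 1) * ((p : ℝ) - 1)))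
      else Γ * ((p : ℝ) ^ 2 / ((p : ℝ) ^ 2 - 1))) :
    w 0 = 0 ∧
    (∀ x y : Matrix (Fin 2) (Fin 2) (ZMod p),
      Set.range (fun r : Matrix (Fin 2) (Fin 2) (ZMod p) => r * x) =
        Set.range (fun r : Matrix (Fin 2) (Fin 2) (ZMod p) => r * y) → w x = w y) ∧
    (∀ x y : Matrix (Fin 2) (Fin 2) (ZMod p),
      Set.range (fun r : Matrix (Fin 2) (Fin 2) (ZMod p) => x * r) =
        Set.range (fun r : Matrix (Fin 2) (Fin 2) (ZMod p) => y * r) → w x = w y) ∧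
    (∀ x : Matrix (Fin 2) (Fin 2) (ZMod p), x ≠ 0 →
      ∑ y ∈ Finset.image (fun r : Matrix (Fin 2) (Fin 2) (ZMod p) => r * x) Finset.univ, w y =
        Γ * (Finset.image (fun r : Matrix (Fin 2) (Fin 2) (ZMod p) => r * x) Finset.univ).card) ∧
    (∀ x : Matrix (Fin 2) (Fin 2) (ZMod p), x ≠ 0 →
      ∑ y ∈ Finset.image (fun r : Matrix (Fin 2) (Fin 2) (ZMod p) => x * r) Finset.univ, w y =
        Γ * (Finset.image (fun r : Matrix (Fin 2) (Fin 2) (ZMod p) => x * r) Finset.univ).card) := by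
  obtain rfl : w = homogeneousWeight (ZMod p) Γ :=
    funext fun A => by rw [hw, homogeneousWeight, ZMod.card]
  exact ⟨homogeneousWeight_zero, fun _ _ => homogeneousWeight_eq_of_range_mul_right_eq,
    fun _ _ => homogeneousWeight_eq_of_range_mul_left_eq,
    fun _ => sum_homogeneousWeight_image_mul_right, fun _ => sum_homogeneousWeight_image_mul_left⟩

/-- The weight `w` on `M₂(𝔽_p)` given by `w(0) = 0`, `w(A) = Γ(1 − 1/((p²−1)(p−1)))` for
`A ∈ GL(2,p)` and `w(A) = Γ p²/(p²−1)` otherwise, is a homogeneous weight with average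
value `Γ`: it is constant on generators of the same principal one-sided ideal (H1), and
its sum over any nonzero principal one-sided ideal `Rx` (resp. `xR`) is `Γ·|Rx|`
(resp. `Γ·|xR|`) (H2). -/
theorem homogeneous_weight_is_homogeneous (p : ℕ) [Fact p.Prime] (Γ : ℝ) (hΓ : 0 < Γ)
    (w : Matrix (Fin 2) (Fin 2) (ZMod p) → ℝ)
    (hw : ∀ A, w A =
      if A = 0 then 0
      else if IsUnit A then Γ * (1 - 1 / (((p : ℝ) ^ 2 - 1) * ((p : ℝ) - 1)))
      else Γ * ((p : ℝ) ^ 2 / ((p : ℝ) ^ 2 - 1))) :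
    w 0 = 0 ∧
    (∀ x y : Matrix (Fin 2) (Fin 2) (ZMod p),
      Set.range (fun r : Matrix (Fin 2) (Fin 2) (ZMod p) => r * x) =
        Set.range (fun r : Matrix (Fin 2) (Fin 2) (ZMod p) => r * y) → w x = w y) ∧
    (∀ x y : Matrix (Fin 2) (Fin 2) (ZMod p),
      Set.range (fun r : Matrix (Fin 2) (Fin 2) (ZMod p) => x * r) =
        Set.range (fun r : Matrix (Fin 2) (Fin 2) (ZMod p) => y * r) → w x = w y) ∧
    (∀ x : Matrix (Fin 2) (Fin 2) (ZMod p), x ≠ 0 →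
      ∑ y ∈ Finset.image (fun r : Matrix (Fin 2) (Fin 2) (ZMod p) => r * x) Finset.univ, w y =
        Γ * (Finset.image (fun r : Matrix (Fin 2) (Fin 2) (ZMod p) => r * x) Finset.univ).card) ∧
    (∀ x : Matrix (Fin 2) (Fin 2) (ZMod p), x ≠ 0 →
      ∑ y ∈ Finset.image (fun r : Matrix (Fin 2) (Fin 2) (ZMod p) => x * r) Finset.univ, w y =
        Γ * (Finset.image (fun r : Matrix (Fin 2) (Fin 2) (ZMod p) => x * r) Finset.univ).card) :=
  homogeneous_weight_is_homogeneous_general p Γ w hw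
end

section
/- Let p be a prime with p ≡ 2 or 3 (mod 5) and let T = [[0,1],[1,p−1]] ∈ M_2(F_p). Then the p-th power of T is T^p = [[p−1, p−1],[p−1, 0]]. -/
/-!
Over `𝔽_p` the matrix `T = [[0, 1], [1, -1]]` is a root of `X² + X - 1`, whose discriminant is `5`.
For `p ≡ ±2 (mod 5)`, `5` is not a square mod `p` by quadratic reciprocity (for `p = 2` one checks
directly that there is no root), so `X² + X - 1` is irreducible. In `𝔽_p[X] / (X² + X - 1) ≅ 𝔽_{p²}`
the Frobenius then moves the root `θ` to the other root `-1 - θ`, i.e. `X ^ p ≡ -1 - X` modulo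
`X² + X - 1`, and therefore `T ^ p = -1 - T`.
-/

open Polynomial

namespace FiniteField

variable {K : Type*} [Field K] [Fintype K]

theorem X_sq_add_C_mul_X_add_C_dvd_X_pow_card_add_X_add_C {b c : K}
    (hf : Irreducible (X ^ 2 + C b * X + C c : K[X])) :
    X ^ 2 + C b * X + C c ∣ (X ^ Fintype.card K + X + C b : K[X]) := by
  set f : K[X] := X ^ 2 + C b * X + C c
  have hdeg : f.natDegree = 2 := by unfold f; compute_degree!
  have : Fact (Irreducible f) := ⟨hf⟩
  have : Module.Finite K (AdjoinRoot f) := (AdjoinRoot.powerBasis hf.ne_zero).finite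
  have : Finite (AdjoinRoot f) := Module.finite_of_finite K
  set θ := AdjoinRoot.root f
  set φ := frobeniusAlgHom K (AdjoinRoot f)
  have hθ : aeval θ f = 0 := AdjoinRoot.aeval_eq f ▸ AdjoinRoot.mk_self
  have hφθ : aeval (φ θ) f = 0 := AdjoinRoot.aeval_algHom_eq_zero (f := f) φ
  -- a Frobenius fixing the generator `θ` would be trivial, but its order is `[L : K] = 2`
  have hφθ_ne : φ θ ≠ θ := fun h ↦ by
    have := orderOf_frobeniusAlgHom K (AdjoinRoot f)
    rw [show frobeniusAlgHom K (AdjoinRoot f) = 1 from AdjoinRoot.algHom_ext h, orderOf_one,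
      (AdjoinRoot.powerBasis hf.ne_zero).finrank, AdjoinRoot.powerBasis_dim, hdeg] at this
    omega
  -- `φ θ` and `θ` are the two roots of `f`, so they sum to `-b`
  have hsum : φ θ + θ + algebraMap K _ b = 0 := by
    simp only [f, map_add, map_mul, map_pow, aeval_X, aeval_C] at hθ hφθ
    refine (mul_eq_zero.mp ?_).resolve_left (sub_ne_zero.mpr hφθ_ne)
    linear_combination hφθ - hθ
  rw [← AdjoinRoot.mk_eq_zero, map_add, map_add, map_pow, AdjoinRoot.mk_X, AdjoinRoot.mk_C]
  exact hsum

theorem pow_card_eq_neg_algebraMap_sub {A : Type*} [Ring A] [Algebra K A] {b c : K}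
    (hf : Irreducible (X ^ 2 + C b * X + C c : K[X])) {a : A}
    (ha : aeval a (X ^ 2 + C b * X + C c) = 0) :
    a ^ Fintype.card K = -algebraMap K A b - a := by
  obtain ⟨g, hg⟩ := X_sq_add_C_mul_X_add_C_dvd_X_pow_card_add_X_add_C hf
  have := congr_arg (aeval a) hg
  rw [map_mul, ha, zero_mul, map_add, map_add, map_pow, aeval_X, aeval_C] at this
  rwa [eq_sub_iff_add_eq, eq_neg_iff_add_eq_zero]

end FiniteField

namespace ZMod

theorem not_isSquare_five {p : ℕ} [Fact p.Prime] (hp : p % 5 = 2 ∨ p % 5 = 3) (hp2 : p ≠ 2) :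
    ¬IsSquare (5 : ZMod p) := by
  have : Fact (Nat.Prime 5) := ⟨by norm_num⟩
  rw [show (5 : ZMod p) = ((5 : ℕ) : ZMod p) by norm_cast,
    ← exists_sq_eq_prime_iff_of_mod_four_eq_one (p := 5) (q := p) (by norm_num) hp2,
    ← natCast_mod p 5]
  rcases hp with h | h <;> rw [h] <;> decide +revert

theorem irreducible_X_sq_add_X_sub_one {p : ℕ} [Fact p.Prime] (hp : p % 5 = 2 ∨ p % 5 = 3) :
    Irreducible (X ^ 2 + X - 1 : (ZMod p)[X]) := by
  refine irreducible_of_degree_le_three_of_not_isRoot ?_ fun x hx ↦ ?_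
  · rw [show (X ^ 2 + X - 1 : (ZMod p)[X]).natDegree = 2 by compute_degree!]
    decide
  simp only [IsRoot, eval_sub, eval_add, eval_pow, eval_X, eval_one] at hx
  rcases eq_or_ne p 2 with rfl | hp2
  · revert x; decide +revert
  -- the discriminant of `X ^ 2 + X - 1` is `5`
  exact not_isSquare_five hp hp2 ⟨2 * x + 1, by linear_combination (-4 : ZMod p) * hx⟩

end ZMod

/-- If `p ≡ 2` or `3 (mod 5)` and `T = [[0,1],[1,p−1]]` is the companion matrix of
`x² + x + (p−1)` over `𝔽_p`, then `T^p = [[p−1, p−1],[p−1, 0]]`. -/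
theorem companion_pow_p (p : ℕ) [Fact p.Prime] (hp : p % 5 = 2 ∨ p % 5 = 3) :
    (!![0, 1; 1, (p : ZMod p) - 1] : Matrix (Fin 2) (Fin 2) (ZMod p)) ^ p =
      !![(p : ZMod p) - 1, (p : ZMod p) - 1; (p : ZMod p) - 1, 0] := by
  rw [ZMod.natCast_self, zero_sub]
  have hirr : Irreducible (X ^ 2 + C 1 * X + C (-1) : (ZMod p)[X]) := by
    simpa [sub_eq_add_neg] using ZMod.irreducible_X_sq_add_X_sub_one hp
  have hroot : aeval (!![0, 1; 1, -1] : Matrix (Fin 2) (Fin 2) (ZMod p))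
      (X ^ 2 + C 1 * X + C (-1) : (ZMod p)[X]) = 0 := by
    ext i j
    fin_cases i <;> fin_cases j <;> simp [sq, Matrix.one_fin_two]
  have hpow := FiniteField.pow_card_eq_neg_algebraMap_sub hirr hroot
  rw [ZMod.card] at hpow
  rw [hpow]
  ext i j
  fin_cases i <;> fin_cases j <;> simp [Matrix.one_fin_two]
end

section
/- Let p be a prime with p ≡ 2 or 3 (mod 5), let T = [[0,1],[1,p−1]] ∈ M_2(F_p) and v_p = [[1,0],[p−1,p−1]] ∈ M_2(F_p). Then v_p·T = T^p·v_p. -/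
/-!
The matrix `T` is a root of its characteristic polynomial `X ^ 2 + X - 1`, whose discriminant is
`5`. By quadratic reciprocity `5` is not a square modulo `p` when `p ≡ 2, 3 (mod 5)` (and for
`p = 2` the polynomial has no root by inspection), so `X ^ 2 + X - 1` is irreducible over `𝔽_p`.
The Frobenius of the quadratic extension `𝔽_p[X] / (X ^ 2 + X - 1)` then swaps the two roots, so
`X ^ 2 + X - 1 ∣ X ^ p + X + 1` and hence `T ^ p = -1 - T`. It remains to check the identity
`v_p T = (-1 - T) v_p` by a direct computation.
-/

open Polynomial

section FiniteField

variable {K : Type*} [Field K] [Fintype K]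

theorem AdjoinRoot.root_pow_card_ne_root {f : K[X]} [Fact (Irreducible f)]
    (hdeg : 2 ≤ f.natDegree) : root f ^ Fintype.card K ≠ root f := by
  have hf0 : f ≠ 0 := Irreducible.ne_zero Fact.out
  let pb := powerBasis hf0
  have : Module.Finite K (AdjoinRoot f) := pb.finite
  have : Finite (AdjoinRoot f) := Module.finite_of_finite K
  intro h
  -- A Frobenius fixing the generator is trivial, but its order is the degree of the extension.
  have hφ : FiniteField.frobeniusAlgHom K (AdjoinRoot f) = 1 := algHom_ext h
  have horder := FiniteField.orderOf_frobeniusAlgHom K (AdjoinRoot f)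
  rw [hφ, orderOf_one, pb.finrank, powerBasis_dim] at horder
  omega

theorem X_sq_add_C_mul_X_add_C_dvd_X_pow_card_add_X_add_C {b c : K}
    (hf : Irreducible (X ^ 2 + C b * X + C c : K[X])) :
    X ^ 2 + C b * X + C c ∣ X ^ Fintype.card K + X + C b := by
  set f : K[X] := X ^ 2 + C b * X + C c
  have := Fact.mk hf
  have hdeg : f.natDegree = 2 := by simp only [f]; compute_degree!
  set r := AdjoinRoot.root f
  set q := Fintype.card K
  have hr : r ^ 2 + algebraMap K _ b * r + algebraMap K _ c = 0 := by
    simpa [f, AdjoinRoot.algebraMap_eq] using AdjoinRoot.eval₂_root f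
  have hrq : (r ^ q) ^ 2 + algebraMap K _ b * r ^ q + algebraMap K _ c = 0 := by
    simpa only [map_add, map_mul, map_pow, AlgHom.commutes, map_zero,
      FiniteField.coe_frobeniusAlgHom] using congrArg (FiniteField.frobeniusAlgHom K _) hr
  have hne : r ^ q - r ≠ 0 := sub_ne_zero.mpr (AdjoinRoot.root_pow_card_ne_root hdeg.ge)
  rw [← AdjoinRoot.mk_eq_zero, map_add, map_add, map_pow, AdjoinRoot.mk_X, AdjoinRoot.mk_C,
    ← AdjoinRoot.algebraMap_eq]
  have hprod : (r ^ q - r) * (r ^ q + r + algebraMap K _ b) = 0 := by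
    linear_combination hrq - hr
  exact (mul_eq_zero.mp hprod).resolve_left hne

theorem pow_card_eq_neg_sub_of_irreducible_quadratic {b c : K}
    (hf : Irreducible (X ^ 2 + C b * X + C c : K[X])) {A : Type*} [Ring A] [Algebra K A] {a : A}
    (ha : a ^ 2 + algebraMap K A b * a + algebraMap K A c = 0) :
    a ^ Fintype.card K = -algebraMap K A b - a := by
  obtain ⟨g, hg⟩ := X_sq_add_C_mul_X_add_C_dvd_X_pow_card_add_X_add_C hf
  have hag := congrArg (aeval a) hg
  simp only [map_add, map_mul, map_pow, aeval_X, aeval_C, ha, zero_mul] at hag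
  rw [eq_sub_iff_add_eq, eq_neg_iff_add_eq_zero, hag]

end FiniteField

section ZMod

variable {p : ℕ} [Fact p.Prime]

theorem ZMod.not_isSquare_five_s13 (hp : p % 5 = 2 ∨ p % 5 = 3) (hp2 : p ≠ 2) :
    ¬IsSquare (5 : ZMod p) := by
  intro h5
  have hp5 : IsSquare (p : ZMod 5) :=
    have : Fact (Nat.Prime 5) := ⟨Nat.prime_five⟩
    (ZMod.exists_sq_eq_prime_iff_of_mod_four_eq_one (by norm_num) hp2).mpr (mod_cast h5)
  rw [← ZMod.natCast_mod] at hp5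
  rcases hp with h | h <;> rw [h] at hp5 <;> exact absurd hp5 (by decide)

theorem ZMod.irreducible_X_sq_add_X_sub_one_s13 (hp : p % 5 = 2 ∨ p % 5 = 3) :
    Irreducible (X ^ 2 + X - 1 : (ZMod p)[X]) := by
  have hdeg : (X ^ 2 + X - 1 : (ZMod p)[X]).natDegree = 2 := by compute_degree!
  refine irreducible_of_degree_le_three_of_not_isRoot (by simp [hdeg]) fun x hx => ?_
  simp only [IsRoot, eval_sub, eval_add, eval_pow, eval_X, eval_one] at hx
  rcases eq_or_ne p 2 with rfl | hp2
  · clear hdeg; revert x hx; decide +revert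
  · refine ZMod.not_isSquare_five_s13 hp hp2 ⟨2 * x + 1, ?_⟩
    linear_combination -4 * hx

end ZMod

/-- If `p ≡ 2` or `3 (mod 5)`, `T = [[0,1],[1,p−1]]` and `v_p = [[1,0],[p−1,p−1]]` in
`M₂(𝔽_p)`, then `v_p · T = T^p · v_p`. -/
theorem vp_mul_companion (p : ℕ) [Fact p.Prime] (hp : p % 5 = 2 ∨ p % 5 = 3) :
    (!![1, 0; (p : ZMod p) - 1, (p : ZMod p) - 1] : Matrix (Fin 2) (Fin 2) (ZMod p)) *
        !![0, 1; 1, (p : ZMod p) - 1] =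
      (!![0, 1; 1, (p : ZMod p) - 1] : Matrix (Fin 2) (Fin 2) (ZMod p)) ^ p *
        !![1, 0; (p : ZMod p) - 1, (p : ZMod p) - 1] := by
  set T : Matrix (Fin 2) (Fin 2) (ZMod p) := !![0, 1; 1, -1]
  have hirr : Irreducible (X ^ 2 + C 1 * X + C (-1) : (ZMod p)[X]) := by
    simpa [sub_eq_add_neg] using ZMod.irreducible_X_sq_add_X_sub_one_s13 hp
  have hT : T ^ 2 + algebraMap (ZMod p) _ 1 * T + algebraMap (ZMod p) _ (-1) = 0 := by
    ext i j; fin_cases i <;> fin_cases j <;> simp [T, sq]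
  have hTp : T ^ p = -1 - T := by
    simpa using pow_card_eq_neg_sub_of_irreducible_quadratic hirr hT
  rw [ZMod.natCast_self, zero_sub, hTp]
  ext i j; fin_cases i <;> fin_cases j <;> simp [T, Matrix.mul_apply, Fin.sum_univ_two]
end
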